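/- Let P and Q be probability distributions on a finite set Ω with power function g = Pow(P‖Q), and let γ₁, γ₂ ≥ 1. Let Q̂ be a probability distribution on Ω such that Q̂(ω) = Q(ω) whenever P(ω) = 0, and (1/γ₂)·Q(ω) ≤ Q̂(ω) ≤ γ₁·Q(ω) whenever P(ω) > 0. Then for every x ∈ [0,1], Pow(P‖Q̂)(x) ≤ min{ min{g(0) + γ₁·(g(x) − g(0)), 1}, (1/γ₂)·g(x) + 1 − 1/γ₂ }. -/

import Mathlib

/-! A test `t` for `P ‖ Q̂` is compared with tests for `P ‖ Q`. On `{P = 0}` the densities agree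
and raising `t` to `1` there costs no `P`-mass, so `g(x) ≥ Q({P = 0}) + Σ_{P > 0} t Q`, while
`Q({P = 0}) = g(0)`; on `{P > 0}` only the factor `γ₁` is paid. Since `Q̂ ≥ Q / γ₂` everywhere,
the rejected mass `Σ (1 - t) Q̂` is at least `(1 - Σ t Q) / γ₂ ≥ (1 - g(x)) / γ₂`. -/

open Finset

/-- The power function `Pow(P ‖ Q)(x)`: the maximum of `Σ t·Q` over `t : Ω → [0,1]`
with `Σ t·P ≤ x` (fractional knapsack). -/
noncomputable def powFn {Ω : Type*} [Fintype Ω] (P Q : Ω → ℝ) (x : ℝ) : ℝ :=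
  sSup {v : ℝ | ∃ t : Ω → ℝ, (∀ ω, 0 ≤ t ω ∧ t ω ≤ 1) ∧
    (∑ ω, t ω * P ω) ≤ x ∧ v = ∑ ω, t ω * Q ω}

section PowerFunction

variable {Ω : Type*} [Fintype Ω] {P Q Qh : Ω → ℝ} {x c : ℝ}

lemma bddAbove_powFn_set (hQ : ∀ ω, 0 ≤ Q ω) (x : ℝ) :
    BddAbove {v : ℝ | ∃ t : Ω → ℝ, (∀ ω, 0 ≤ t ω ∧ t ω ≤ 1) ∧
      (∑ ω, t ω * P ω) ≤ x ∧ v = ∑ ω, t ω * Q ω} := by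
  refine ⟨∑ ω, Q ω, ?_⟩
  rintro v ⟨t, ht, -, rfl⟩
  exact sum_le_sum fun ω _ => mul_le_of_le_one_left (hQ ω) (ht ω).2

lemma le_powFn (hQ : ∀ ω, 0 ≤ Q ω) {t : Ω → ℝ} (ht : ∀ ω, 0 ≤ t ω ∧ t ω ≤ 1)
    (htP : ∑ ω, t ω * P ω ≤ x) : ∑ ω, t ω * Q ω ≤ powFn P Q x :=
  le_csSup (bddAbove_powFn_set hQ x) ⟨t, ht, htP, rfl⟩

lemma powFn_le (hx : 0 ≤ x)
    (h : ∀ t : Ω → ℝ, (∀ ω, 0 ≤ t ω ∧ t ω ≤ 1) → ∑ ω, t ω * P ω ≤ x → ∑ ω, t ω * Q ω ≤ c) :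
    powFn P Q x ≤ c := by
  refine csSup_le ⟨0, 0, fun _ => by norm_num, by simpa using hx, by simp⟩ ?_
  rintro v ⟨t, ht, htP, rfl⟩
  exact h t ht htP

lemma powFn_le_sum (hQ : ∀ ω, 0 ≤ Q ω) (hx : 0 ≤ x) : powFn P Q x ≤ ∑ ω, Q ω :=
  powFn_le hx fun _ ht _ => sum_le_sum fun ω _ => mul_le_of_le_one_left (hQ ω) (ht ω).2

lemma powFn_zero (hP : ∀ ω, 0 ≤ P ω) (hQ : ∀ ω, 0 ≤ Q ω) :
    powFn P Q 0 = ∑ ω ∈ univ.filter (P · = 0), Q ω := by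
  rw [sum_filter]
  apply le_antisymm
  · refine powFn_le le_rfl fun t ht htP => sum_le_sum fun ω _ => ?_
    have htP_zero : t ω * P ω = 0 :=
      (sum_eq_zero_iff_of_nonneg fun ω _ => mul_nonneg (ht ω).1 (hP ω)).1
        (htP.antisymm (sum_nonneg fun ω _ => mul_nonneg (ht ω).1 (hP ω))) ω (mem_univ ω)
    by_cases h : P ω = 0
    · simpa [h] using mul_le_of_le_one_left (hQ ω) (ht ω).2
    · simp [h, (mul_eq_zero.1 htP_zero).resolve_right h]
  · have hnull_mass : ∑ ω, (if P ω = 0 then (1 : ℝ) else 0) * P ω = 0 :=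
      sum_eq_zero fun ω _ => by split_ifs with h <;> simp [h]
    refine (sum_congr rfl fun ω _ => ?_).trans_le
      (le_powFn hQ (fun ω => by split_ifs <;> norm_num) hnull_mass.le)
    split_ifs <;> simp

theorem powFn_le_powFn_zero_add_mul (hP : ∀ ω, 0 ≤ P ω) (hQ : ∀ ω, 0 ≤ Q ω) (hx : 0 ≤ x)
    {γ : ℝ} (hγ : 0 ≤ γ) (hnull : ∀ ω, P ω = 0 → Qh ω = Q ω)
    (hle : ∀ ω, 0 < P ω → Qh ω ≤ γ * Q ω) :
    powFn P Qh x ≤ powFn P Q 0 + γ * (powFn P Q x - powFn P Q 0) := by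
  refine powFn_le hx fun t ht htP => ?_
  set t' : Ω → ℝ := fun ω => if P ω = 0 then 1 else t ω
  have ht' : ∀ ω, 0 ≤ t' ω ∧ t' ω ≤ 1 := fun ω => by
    by_cases h : P ω = 0 <;> simp [t', h, ht ω]
  have ht'P : ∑ ω, t' ω * P ω ≤ x := by
    convert htP using 2 with ω
    by_cases h : P ω = 0 <;> simp [t', h]
  have hpoint : ∀ ω,
      t ω * Qh ω ≤ (1 - γ) * (if P ω = 0 then Q ω else 0) + γ * (t' ω * Q ω) := fun ω => by
    by_cases h : P ω = 0
    · simp only [t', h, if_true, hnull ω h]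
      linarith [mul_le_of_le_one_left (hQ ω) (ht ω).2]
    · simpa [t', h, mul_left_comm γ] using
        mul_le_mul_of_nonneg_left (hle ω ((hP ω).lt_of_ne' h)) (ht ω).1
  calc ∑ ω, t ω * Qh ω
      ≤ ∑ ω, ((1 - γ) * (if P ω = 0 then Q ω else 0) + γ * (t' ω * Q ω)) :=
        sum_le_sum fun ω _ => hpoint ω
    _ = (1 - γ) * powFn P Q 0 + γ * ∑ ω, t' ω * Q ω := by
        rw [sum_add_distrib, ← mul_sum, ← mul_sum, powFn_zero hP hQ, sum_filter]
    _ ≤ (1 - γ) * powFn P Q 0 + γ * powFn P Q x := by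
        gcongr
        exact le_powFn hQ ht' ht'P
    _ = powFn P Q 0 + γ * (powFn P Q x - powFn P Q 0) := by ring

theorem powFn_le_mul_add_one_sub (hQ : ∀ ω, 0 ≤ Q ω) (hQsum : ∑ ω, Q ω = 1)
    (hQhsum : ∑ ω, Qh ω = 1) (hx : 0 ≤ x) (hc : 0 ≤ c) (hdom : ∀ ω, c * Q ω ≤ Qh ω) :
    powFn P Qh x ≤ c * powFn P Q x + 1 - c := by
  refine powFn_le hx fun t ht htP => ?_
  have hrejected : c * ∑ ω, (1 - t ω) * Q ω ≤ ∑ ω, (1 - t ω) * Qh ω := by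
    rw [mul_sum]
    exact sum_le_sum fun ω _ => by
      simpa [mul_left_comm c] using mul_le_mul_of_nonneg_left (hdom ω) (sub_nonneg.2 (ht ω).2)
  simp only [sub_mul, one_mul, sum_sub_distrib, hQsum, hQhsum] at hrejected
  nlinarith [mul_le_mul_of_nonneg_left (le_powFn hQ ht htP) hc]

end PowerFunction

theorem power_function_perturbation_bound_general
    {Ω : Type*} [Fintype Ω] (P Q Qh : Ω → ℝ)
    (hP : ∀ ω, 0 ≤ P ω)
    (hQ : ∀ ω, 0 ≤ Q ω) (hQsum : ∑ ω, Q ω = 1)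
    (hQh : ∀ ω, 0 ≤ Qh ω) (hQhsum : ∑ ω, Qh ω = 1)
    (γ₁ γ₂ : ℝ) (hγ₁ : 1 ≤ γ₁) (hγ₂ : 1 ≤ γ₂)
    (hzero : ∀ ω, P ω = 0 → Qh ω = Q ω)
    (hpos : ∀ ω, 0 < P ω → (1 / γ₂) * Q ω ≤ Qh ω ∧ Qh ω ≤ γ₁ * Q ω) :
    ∀ x ∈ Set.Icc (0:ℝ) 1,
      powFn P Qh x ≤
        min (min (powFn P Q 0 + γ₁ * (powFn P Q x - powFn P Q 0)) 1)
          ((1 / γ₂) * powFn P Q x + 1 - 1 / γ₂) := by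
  rintro x ⟨hx, -⟩
  refine le_min (le_min ?_ ?_) ?_
  · exact powFn_le_powFn_zero_add_mul hP hQ hx (by linarith) hzero fun ω h => (hpos ω h).2
  · exact hQhsum ▸ powFn_le_sum hQh hx
  · refine powFn_le_mul_add_one_sub hQ hQsum hQhsum hx (by positivity) fun ω => ?_
    rcases (hP ω).eq_or_lt with h | h
    · rw [hzero ω h.symm]
      exact mul_le_of_le_one_left (hQ ω) ((div_le_one (by linarith)).2 hγ₂)
    · exact (hpos ω h).1

/-- **Density perturbation stretches the power curve.**
Let `P`, `Q` be probability distributions on a finite set `Ω` with power function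
`g = Pow(P ‖ Q)`, and let `γ₁, γ₂ ≥ 1`.  If `Q̂` is a probability distribution with
`Q̂(ω) = Q(ω)` whenever `P(ω) = 0` and `(1/γ₂)·Q(ω) ≤ Q̂(ω) ≤ γ₁·Q(ω)` whenever
`P(ω) > 0`, then for every `x ∈ [0,1]`,
`Pow(P ‖ Q̂)(x) ≤ min{ min{g(0) + γ₁·(g(x) − g(0)), 1}, (1/γ₂)·g(x) + 1 − 1/γ₂ }`. -/
theorem power_function_perturbation_bound
    {Ω : Type*} [Fintype Ω] (P Q Qh : Ω → ℝ)
    (hP : ∀ ω, 0 ≤ P ω) (hPsum : ∑ ω, P ω = 1)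
    (hQ : ∀ ω, 0 ≤ Q ω) (hQsum : ∑ ω, Q ω = 1)
    (hQh : ∀ ω, 0 ≤ Qh ω) (hQhsum : ∑ ω, Qh ω = 1)
    (γ₁ γ₂ : ℝ) (hγ₁ : 1 ≤ γ₁) (hγ₂ : 1 ≤ γ₂)
    (hzero : ∀ ω, P ω = 0 → Qh ω = Q ω)
    (hpos : ∀ ω, 0 < P ω → (1 / γ₂) * Q ω ≤ Qh ω ∧ Qh ω ≤ γ₁ * Q ω) :
    ∀ x ∈ Set.Icc (0:ℝ) 1,
      powFn P Qh x ≤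
        min (min (powFn P Q 0 + γ₁ * (powFn P Q x - powFn P Q 0)) 1)
          ((1 / γ₂) * powFn P Q x + 1 - 1 / γ₂) :=
  power_function_perturbation_bound_general P Q Qh hP hQ hQsum hQh hQhsum γ₁ γ₂ hγ₁ hγ₂ hzero hpos
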